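/- Let T = ℝ/ℤ be the circle and define f_0, f_1 : T → T by f_0(x) = 2x and f_1(x) = 3x. Then for every σ ∈ {0,1}^ℕ there exists x ∈ T such that the orbit of x along σ, namely {x} ∪ {(f_{σ_n} ∘ ⋯ ∘ f_{σ_1})(x) : n ≥ 1}, is dense in T; that is, the IFS (T, {f_0, f_1}, full shift) is point transitive along every σ. -/

import Mathlib

/-- `applyWord F u x` is `f_u(x) = f_{u_n} ∘ ⋯ ∘ f_{u_1} (x)` for the word `u = u_1 ⋯ u_n`. -/
def applyWord {X : Type*} {k : ℕ} (F : Fin k → X → X) : List (Fin k) → X → X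
  | [], x => x
  | a :: u, x => applyWord F u (F a x)

/-- `f₀ = doubling`, `f₁ = tripling` on the circle `ℝ/ℤ`. -/
noncomputable def circleIFS : Fin 2 → AddCircle (1 : ℝ) → AddCircle (1 : ℝ) :=
  fun i y => if i = 0 then y + y else y + y + y

lemma applyWord_eq_smul (u : List (Fin 2)) (x : AddCircle (1 : ℝ)) :
    applyWord circleIFS u x = (u.map fun i => 2 + i.val).prod • x := by
  induction u generalizing x with
  | nil => simp [applyWord]
  | cons a u ih =>
      rw [applyWord, ih]
      have ha : circleIFS a x = (2 + a.val) • x := by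
        fin_cases a <;> simp [circleIFS] <;> abel
      rw [ha, smul_smul, List.map_cons, List.prod_cons, Nat.mul_comm]

lemma prod_ge (u : List (Fin 2)) : 2 ^ u.length ≤ (u.map fun i => 2 + i.val).prod := by
  induction u with
  | nil => simp
  | cons a u ih =>
      rw [List.map_cons, List.prod_cons, List.length_cons, pow_succ, Nat.mul_comm]
      exact Nat.mul_le_mul (by omega) ih

lemma int_coe_zero (j : ℤ) : ((j : ℝ) : AddCircle (1:ℝ)) = 0 := by
  rw [AddCircle.coe_eq_zero_iff]; exact ⟨j, by simp⟩

/-- Key lemma: any fixed point `z` has an `nsmul`-preimage in any nonempty open `J`,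
for all sufficiently large `k`. -/
lemma key_exists (U J : Set (AddCircle (1:ℝ))) (hUne : U.Nonempty)
    (hJ : IsOpen J) (hJne : J.Nonempty) :
    ∃ N : ℕ, ∀ k : ℕ, N ≤ k → ∃ x ∈ J, k • x ∈ U := by
  obtain ⟨z, hz⟩ := hUne
  obtain ⟨z₀, rfl⟩ := QuotientAddGroup.mk_surjective z
  obtain ⟨y, hy⟩ := hJne
  obtain ⟨a, rfl⟩ := QuotientAddGroup.mk_surjective y
  have hJ' : IsOpen (((↑) : ℝ → AddCircle (1:ℝ)) ⁻¹' J) :=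
    hJ.preimage (AddCircle.continuous_mk' 1)
  obtain ⟨ε, hε, hball⟩ := Metric.isOpen_iff.mp hJ' a hy
  obtain ⟨N, hN⟩ := exists_nat_gt (1 / ε)
  refine ⟨N + 1, fun k hk => ?_⟩
  have hk0 : 0 < k := by omega
  have hkR : (0:ℝ) < k := by exact_mod_cast hk0
  have hkε : 1 < (k:ℝ) * ε := by
    have h1 : 1 / ε < (k : ℝ) := lt_of_lt_of_le hN (by exact_mod_cast (by omega : N ≤ k))
    rw [div_lt_iff₀ hε] at h1
    linarith
  set j : ℤ := ⌊(k:ℝ) * (a - ε) - z₀⌋ + 1 with hj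
  set t : ℝ := (z₀ + j) / k with ht
  have hjl : (k:ℝ) * (a - ε) - z₀ < (j:ℝ) := by
    have := Int.lt_floor_add_one ((k:ℝ) * (a - ε) - z₀)
    push_cast [hj]; linarith
  have hju : (j:ℝ) < (k:ℝ) * (a + ε) - z₀ := by
    have := Int.floor_le ((k:ℝ) * (a - ε) - z₀)
    push_cast [hj]
    nlinarith
  have htl : a - ε < t := by
    rw [ht, lt_div_iff₀ hkR]; nlinarith
  have htu : t < a + ε := by
    rw [ht, div_lt_iff₀ hkR]; nlinarith
  refine ⟨(t : AddCircle (1:ℝ)), ?_, ?_⟩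
  · apply hball
    rw [Metric.mem_ball, Real.dist_eq, abs_sub_lt_iff]
    constructor <;> linarith
  · have : (k:ℕ) • ((t : ℝ) : AddCircle (1:ℝ)) = ((z₀ : ℝ) : AddCircle (1:ℝ)) := by
      rw [← QuotientAddGroup.mk_nsmul]
      have hkt : (k:ℕ) • t = z₀ + (j:ℝ) := by
        rw [nsmul_eq_mul, ht, mul_div_cancel₀ _ (ne_of_gt hkR)]
      rw [hkt, QuotientAddGroup.mk_add, int_coe_zero, add_zero]
    rw [this]; exact hz

/-- For the IFS on the circle with `f₀(x) = 2x` and `f₁(x) = 3x`, along every `σ ∈ {0,1}^ℕ`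
there is a point with dense orbit: the IFS is point transitive along every orbit. -/
theorem stmt18 :
    ∀ σ : ℕ → Fin 2, ∃ x : AddCircle (1 : ℝ),
      Dense (Set.range fun n : ℕ =>
        applyWord circleIFS (List.ofFn fun i : Fin n => σ i) x) := by
  intro σ
  set m : ℕ → ℕ := fun n =>
    ((List.ofFn fun i : Fin n => σ i).map fun i => 2 + i.val).prod with hm
  have hm_ge : ∀ n, 2 ^ n ≤ m n := by
    intro n
    simp only [hm]
    have := prod_ge (List.ofFn fun i : Fin n => σ i)
    rwa [List.length_ofFn] at this
  obtain ⟨B, hBc, hBne, hB⟩ :=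
    TopologicalSpace.exists_countable_basis (AddCircle (1:ℝ))
  -- the countable family of open dense sets
  set A : Set (AddCircle (1:ℝ)) → Set (AddCircle (1:ℝ)) :=
    fun U => ⋃ n : ℕ, (fun x => m n • x) ⁻¹' U with hA
  have hAopen : ∀ U ∈ B, IsOpen (A U) := by
    intro U hU
    exact isOpen_iUnion fun n => (hB.isOpen hU).preimage (continuous_nsmul _)
  have hAdense : ∀ U ∈ B, Dense (A U) := by
    intro U hU
    rw [dense_iff_inter_open]
    intro J hJ hJne
    have hUne : U.Nonempty := Set.nonempty_iff_ne_empty.mpr (by rintro rfl; exact hBne hU)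
    obtain ⟨N, hN⟩ := key_exists U J hUne hJ hJne
    obtain ⟨x, hxJ, hxU⟩ := hN (m N) (le_trans (Nat.le_of_lt (Nat.lt_two_pow_self (n := N))) (hm_ge N))
    exact ⟨x, hxJ, Set.mem_iUnion.mpr ⟨N, hxU⟩⟩
  have hdense : Dense (⋂₀ (A '' B)) := by
    apply dense_sInter_of_isOpen
    · rintro s ⟨U, hU, rfl⟩; exact hAopen U hU
    · exact hBc.image A
    · rintro s ⟨U, hU, rfl⟩; exact hAdense U hU
  obtain ⟨x, hx⟩ := hdense.nonempty
  refine ⟨x, ?_⟩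
  rw [hB.dense_iff]
  intro U hU hUne
  have hxA : x ∈ A U := hx (A U) ⟨U, hU, rfl⟩
  obtain ⟨n, hn⟩ := Set.mem_iUnion.mp hxA
  refine ⟨applyWord circleIFS (List.ofFn fun i : Fin n => σ i) x, ?_, ⟨n, rfl⟩⟩
  rw [applyWord_eq_smul]
  exact hn
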